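/- Fix real numbers D₁ ≥ 0 and p₀ ≥ 0. For each natural number T ≥ 2, define b_T(t) = (4/9)·(1 - t/T)² and let D_T : ℕ → ℝ be the sequence determined by D_T(1) = D₁ and D_T(t + 1) = b_T(t)·(D_T(t) + p₀) for 1 ≤ t ≤ T - 1. Then the terminal values D_T(T) tend to 0 as T → ∞. -/

import Mathlib

/-- Proposition 3.5 of the paper (order-2 stability of the GWO under the
stagnation assumption), stated for the variance recursion
`D_T(t+1) = b_T(t) (D_T(t) + p₀)` with `b_T(t) = (4/9)(1 - t/T)²` and
`D_T(1) = D₁`: the terminal values `D_T(T)` tend to `0` as `T → ∞`. -/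
theorem gwo_order_two_stability_recursion
    (D₁ p₀ : ℝ) (hD₁ : 0 ≤ D₁) (hp₀ : 0 ≤ p₀)
    (D : ℕ → ℕ → ℝ)
    (hinit : ∀ T : ℕ, 2 ≤ T → D T 1 = D₁)
    (hrec : ∀ T : ℕ, 2 ≤ T → ∀ t : ℕ, 1 ≤ t → t ≤ T - 1 →
      D T (t + 1) = (4/9) * (1 - (t : ℝ) / (T : ℝ))^2 * (D T t + p₀)) :
    Filter.Tendsto (fun T : ℕ => D T T) Filter.atTop (nhds 0) := by
  obtain ⟨M, hMnn, hMD, hMrec⟩ :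
      ∃ M : ℝ, 0 ≤ M ∧ D₁ ≤ M ∧ (4/9) * (M + p₀) ≤ M :=
    ⟨D₁ + (4/5) * p₀, by positivity, by linarith, by linarith⟩
  -- uniform bounds on D T t
  have hbound : ∀ T : ℕ, 2 ≤ T → ∀ t : ℕ, 1 ≤ t → t ≤ T →
      0 ≤ D T t ∧ D T t ≤ M := by
    intro T hT
    intro t h1
    induction t, h1 using Nat.le_induction with
    | base =>
      intro _
      rw [hinit T hT]
      exact ⟨hD₁, hMD⟩
    | succ t ht ih =>
      intro hle
      have htT : t ≤ T - 1 := by omega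
      have ih' := ih (by omega)
      have hTpos : (0:ℝ) < (T:ℝ) := by exact_mod_cast (by omega : 0 < T)
      have hfrac0 : (0:ℝ) ≤ (t:ℝ) / (T:ℝ) := by positivity
      have hfrac1 : (t:ℝ) / (T:ℝ) ≤ 1 := by
        rw [div_le_one hTpos]; exact_mod_cast (by omega : t ≤ T)
      have hsq : (1 - (t:ℝ)/(T:ℝ))^2 ≤ 1 := by nlinarith
      have hsq0 : (0:ℝ) ≤ (1 - (t:ℝ)/(T:ℝ))^2 := sq_nonneg _
      rw [hrec T hT t ht htT]
      constructor
      · have := ih'.1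
        positivity
      · nlinarith [ih'.1, ih'.2, hMrec]
  -- squeeze
  have hkey : ∀ T : ℕ, 2 ≤ T →
      0 ≤ D T T ∧ D T T ≤ (4/9) * (M + p₀) / (T:ℝ)^2 := by
    intro T hT
    have hTpos : (0:ℝ) < (T:ℝ) := by exact_mod_cast (by omega : 0 < T)
    have heq : D T T = (4/9) * (1 - ((T-1 : ℕ):ℝ) / (T:ℝ))^2 * (D T (T-1) + p₀) := by
      have := hrec T hT (T-1) (by omega) (by omega)
      rwa [show T - 1 + 1 = T by omega] at this
    have hcast : ((T-1 : ℕ):ℝ) = (T:ℝ) - 1 := by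
      have : (1:ℕ) ≤ T := by omega
      push_cast [this]; ring
    have hfrac : (1 - ((T-1 : ℕ):ℝ) / (T:ℝ)) = 1 / (T:ℝ) := by
      rw [hcast]; field_simp; ring
    rw [heq, hfrac]
    have hb := hbound T hT (T-1) (by omega) (by omega)
    constructor
    · have := hb.1; positivity
    · have h1 : (4/9) * (1/(T:ℝ))^2 * (D T (T-1) + p₀)
          = (4/9) * (D T (T-1) + p₀) / (T:ℝ)^2 := by
        field_simp
      rw [h1]
      gcongr
      exact hb.2
  have htend : Filter.Tendsto (fun T : ℕ => (4/9) * (M + p₀) / (T:ℝ)^2)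
      Filter.atTop (nhds 0) := by
    apply Filter.Tendsto.div_atTop tendsto_const_nhds
    exact (Filter.tendsto_pow_atTop (two_ne_zero)).comp tendsto_natCast_atTop_atTop
  refine squeeze_zero' ?_ ?_ htend
  · filter_upwards [Filter.eventually_ge_atTop 2] with T hT using (hkey T hT).1
  · filter_upwards [Filter.eventually_ge_atTop 2] with T hT using (hkey T hT).2
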